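/- arXiv:math/0504123 — 2 statements merged into one kernel-verified Lean document; each statement's English description precedes it below -/
import Mathlib

section
/- Let 𝔤 be a Lie algebra with invariant symmetric bilinear form ⟨·,·⟩ and k a real number. Let P₀𝔤 be the Lie algebra of smooth maps p : [0,2π] → 𝔤 with p(0)=0 (pointwise bracket), and let Ω𝔤⊕ℝ be the level-k Kac–Moody central extension with bracket [(ℓ₁,c₁),(ℓ₂,c₂)] = ([ℓ₁,ℓ₂], 2k∫₀^{2π}⟨ℓ₁,ℓ₂'⟩dθ). Then the map dα : P₀𝔤 → End(Ω𝔤⊕ℝ) given by dα(p)(ℓ,c) = ([p,ℓ], 2k∫₀^{2π}⟨p(θ),ℓ'(θ)⟩dθ) is an action of P₀𝔤 by derivations: dα([p₁,p₂]) = dα(p₁)∘dα(p₂) − dα(p₂)∘dα(p₁), and each dα(p) is a derivation of the bracket on Ω𝔤⊕ℝ. -/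
/-- The level-`k` Kac–Moody bracket on `Ω𝔤 ⊕ ℝ`. -/
noncomputable def kmBracket {E : Type*} [NormedAddCommGroup E] [NormedSpace ℝ E]
    (br : E →ₗ[ℝ] E →ₗ[ℝ] E) (B : E →ₗ[ℝ] E →ₗ[ℝ] ℝ) (k : ℝ)
    (x y : (ℝ → E) × ℝ) : (ℝ → E) × ℝ :=
  ((fun θ => br (x.1 θ) (y.1 θ)),
    2 * k * ∫ θ in (0:ℝ)..(2 * Real.pi), B (x.1 θ) (deriv y.1 θ))

/-- The action `dα` of the path algebra `P₀𝔤` on `Ω𝔤 ⊕ ℝ`: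
`dα(p)(ℓ,c) = ([p,ℓ], 2k∫⟨p,ℓ'⟩)`. -/
noncomputable def dAlpha {E : Type*} [NormedAddCommGroup E] [NormedSpace ℝ E]
    (br : E →ₗ[ℝ] E →ₗ[ℝ] E) (B : E →ₗ[ℝ] E →ₗ[ℝ] ℝ) (k : ℝ)
    (p : ℝ → E) (v : (ℝ → E) × ℝ) : (ℝ → E) × ℝ :=
  ((fun θ => br (p θ) (v.1 θ)),
    2 * k * ∫ θ in (0:ℝ)..(2 * Real.pi), B (p θ) (deriv v.1 θ))

section aux
variable {E : Type*} [NormedAddCommGroup E] [NormedSpace ℝ E] [FiniteDimensional ℝ E]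
variable {F : Type*} [NormedAddCommGroup F] [NormedSpace ℝ F]

/-- A bilinear map out of a finite-dimensional space, as a continuous bilinear map. -/
noncomputable def clm2 (b : E →ₗ[ℝ] E →ₗ[ℝ] F) : E →L[ℝ] E →L[ℝ] F :=
  LinearMap.toContinuousLinearMap
    ((LinearMap.toContinuousLinearMap : (E →ₗ[ℝ] F) ≃ₗ[ℝ] (E →L[ℝ] F)).toLinearMap.comp b)

@[simp] lemma clm2_apply (b : E →ₗ[ℝ] E →ₗ[ℝ] F) (x y : E) : clm2 b x y = b x y := by
  simp [clm2]

/-- Leibniz rule for a bilinear map applied to two differentiable curves. -/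
lemma hasDerivAt_bilin (b : E →ₗ[ℝ] E →ₗ[ℝ] F) {f g : ℝ → E} {θ : ℝ}
    (hf : DifferentiableAt ℝ f θ) (hg : DifferentiableAt ℝ g θ) :
    HasDerivAt (fun t => b (f t) (g t))
      (b (deriv f θ) (g θ) + b (f θ) (deriv g θ)) θ := by
  have h1 : HasDerivAt (fun t => clm2 b (f t)) (clm2 b (deriv f θ)) θ :=
    (clm2 b).hasFDerivAt.comp_hasDerivAt θ hf.hasDerivAt
  have h2 := h1.clm_apply hg.hasDerivAt
  simpa using h2

lemma continuous_bilin (b : E →ₗ[ℝ] E →ₗ[ℝ] F) {f g : ℝ → E}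
    (hf : Continuous f) (hg : Continuous g) :
    Continuous fun t => b (f t) (g t) := by
  have := (clm2 b).isBoundedBilinearMap.continuous.comp (hf.prodMk hg)
  exact this
end aux

/-- `dα` is an action of `P₀𝔤` on the level-`k` Kac–Moody central
extension `Ω𝔤 ⊕ ℝ` by derivations: `dα([p₁,p₂]) = dα(p₁)∘dα(p₂) − dα(p₂)∘dα(p₁)`
and each `dα(p)` is a derivation of the Kac–Moody bracket. -/
theorem dAlpha_action_by_derivations
    (E : Type*) [NormedAddCommGroup E] [NormedSpace ℝ E] [FiniteDimensional ℝ E]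
    (br : E →ₗ[ℝ] E →ₗ[ℝ] E)
    (halt : ∀ x : E, br x x = 0)
    (hjac : ∀ x y z : E, br (br x y) z + br (br y z) x + br (br z x) y = 0)
    (B : E →ₗ[ℝ] E →ₗ[ℝ] ℝ)
    (hsymm : ∀ x y : E, B x y = B y x)
    (hinv : ∀ x y z : E, B (br x y) z = B x (br y z))
    (k : ℝ)
    (p p₁ p₂ : ℝ → E)
    (hp : ContDiff ℝ (⊤ : ℕ∞) p) (hp0 : p 0 = 0)
    (hp₁ : ContDiff ℝ (⊤ : ℕ∞) p₁) (hp₁0 : p₁ 0 = 0)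
    (hp₂ : ContDiff ℝ (⊤ : ℕ∞) p₂) (hp₂0 : p₂ 0 = 0)
    (v w : (ℝ → E) × ℝ)
    (hv : ContDiff ℝ (⊤ : ℕ∞) v.1) (hv0 : v.1 0 = 0) (hv1 : v.1 (2 * Real.pi) = 0)
    (hw : ContDiff ℝ (⊤ : ℕ∞) w.1) (hw0 : w.1 0 = 0) (hw1 : w.1 (2 * Real.pi) = 0) :
    -- dα is a Lie algebra action
    (dAlpha br B k (fun θ => br (p₁ θ) (p₂ θ)) v
      = dAlpha br B k p₁ (dAlpha br B k p₂ v)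
        - dAlpha br B k p₂ (dAlpha br B k p₁ v)) ∧
    -- each dα(p) is a derivation of the Kac–Moody bracket
    (dAlpha br B k p (kmBracket br B k v w)
      = kmBracket br B k (dAlpha br B k p v) w
        + kmBracket br B k v (dAlpha br B k p w)) := by
  have hanti : ∀ x y : E, br x y = - br y x := by
    intro x y
    have h := halt (x + y)
    simp only [map_add, LinearMap.add_apply, halt x, halt y, zero_add, add_zero] at h
    exact eq_neg_of_add_eq_zero_right h
  have hbr3 : ∀ x y z : E, br (br x y) z = br x (br y z) - br y (br x z) := by
    intro x y z
    have h := hjac x y z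
    have h1 : br (br y z) x = - br x (br y z) := hanti _ _
    have h2 : br (br z x) y = br y (br x z) := by
      rw [hanti z x]; simp [hanti (br x z) y]
    rw [h1, h2] at h
    have h' : br (br x y) z + (- br x (br y z) + br y (br x z)) = 0 := by
      rw [← h]; abel
    rw [eq_neg_of_add_eq_zero_left h']; abel
  have hdp : Differentiable ℝ p := hp.differentiable (by simp)
  have hdp₁ : Differentiable ℝ p₁ := hp₁.differentiable (by simp)
  have hdp₂ : Differentiable ℝ p₂ := hp₂.differentiable (by simp)
  have hdv : Differentiable ℝ v.1 := hv.differentiable (by simp)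
  have hdw : Differentiable ℝ w.1 := hw.differentiable (by simp)
  have hcp : Continuous p := hp.continuous
  have hcp₁ : Continuous p₁ := hp₁.continuous
  have hcp₂ : Continuous p₂ := hp₂.continuous
  have hcv : Continuous v.1 := hv.continuous
  have hcw : Continuous w.1 := hw.continuous
  have hcp' : Continuous (deriv p) := hp.continuous_deriv (by simp)
  have hcp₁' : Continuous (deriv p₁) := hp₁.continuous_deriv (by simp)
  have hcp₂' : Continuous (deriv p₂) := hp₂.continuous_deriv (by simp)
  have hcv' : Continuous (deriv v.1) := hv.continuous_deriv (by simp)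
  have hcw' : Continuous (deriv w.1) := hw.continuous_deriv (by simp)
  constructor
  · -- the action property
    simp only [dAlpha]
    rw [Prod.ext_iff]
    constructor
    · -- first components: Jacobi identity
      simp only [Prod.fst_sub]
      funext θ
      simp only [Pi.sub_apply]
      exact hbr3 _ _ _
    · -- second components
      simp only [Prod.snd_sub]
      have e₁ : ∀ θ : ℝ, deriv (fun t => br (p₁ t) (v.1 t)) θ
          = br (deriv p₁ θ) (v.1 θ) + br (p₁ θ) (deriv v.1 θ) := fun θ =>
        (hasDerivAt_bilin br (hdp₁ θ) (hdv θ)).deriv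
      have e₂ : ∀ θ : ℝ, deriv (fun t => br (p₂ t) (v.1 t)) θ
          = br (deriv p₂ θ) (v.1 θ) + br (p₂ θ) (deriv v.1 θ) := fun θ =>
        (hasDerivAt_bilin br (hdp₂ θ) (hdv θ)).deriv
      have int1 : (∫ θ in (0:ℝ)..(2 * Real.pi), B (p₁ θ) (deriv (fun t => br (p₂ t) (v.1 t)) θ))
          = ∫ θ in (0:ℝ)..(2 * Real.pi),
              (B (p₁ θ) (br (deriv p₂ θ) (v.1 θ)) + B (p₁ θ) (br (p₂ θ) (deriv v.1 θ))) :=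
        intervalIntegral.integral_congr (fun θ _ => by simp only [e₂ θ, map_add])
      have int2 : (∫ θ in (0:ℝ)..(2 * Real.pi), B (p₂ θ) (deriv (fun t => br (p₁ t) (v.1 t)) θ))
          = ∫ θ in (0:ℝ)..(2 * Real.pi),
              (B (p₂ θ) (br (deriv p₁ θ) (v.1 θ)) + B (p₂ θ) (br (p₁ θ) (deriv v.1 θ))) :=
        intervalIntegral.integral_congr (fun θ _ => by simp only [e₁ θ, map_add])
      rw [int1, int2]
      -- total derivative term
      set DG : ℝ → ℝ := fun θ =>
        B (br (deriv p₁ θ) (p₂ θ) + br (p₁ θ) (deriv p₂ θ)) (v.1 θ)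
          + B (br (p₁ θ) (p₂ θ)) (deriv v.1 θ) with hDG
      have hcontDG : Continuous DG := by
        apply Continuous.add
        · exact continuous_bilin B
            ((continuous_bilin br hcp₁' hcp₂).add (continuous_bilin br hcp₁ hcp₂')) hcv
        · exact continuous_bilin B (continuous_bilin br hcp₁ hcp₂) hcv'
      have hFTC : (∫ θ in (0:ℝ)..(2 * Real.pi), DG θ) = 0 := by
        have key : ∀ x ∈ Set.uIcc (0:ℝ) (2 * Real.pi),
            HasDerivAt (fun t => B (br (p₁ t) (p₂ t)) (v.1 t)) (DG x) x := by
          intro x _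
          have hF : HasDerivAt (fun t => br (p₁ t) (p₂ t))
              (br (deriv p₁ x) (p₂ x) + br (p₁ x) (deriv p₂ x)) x :=
            hasDerivAt_bilin br (hdp₁ x) (hdp₂ x)
          have h := hasDerivAt_bilin B (f := fun t => br (p₁ t) (p₂ t))
            hF.differentiableAt (hdv x)
          rw [hF.deriv] at h
          exact h
        rw [intervalIntegral.integral_eq_sub_of_hasDerivAt key
          (hcontDG.intervalIntegrable _ _)]
        rw [hv1, hv0]; simp
      have hintA : IntervalIntegrable (fun θ => B (br (p₁ θ) (p₂ θ)) (deriv v.1 θ))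
          MeasureTheory.volume 0 (2 * Real.pi) :=
        (continuous_bilin B (continuous_bilin br hcp₁ hcp₂) hcv').intervalIntegrable _ _
      have hintS1 : IntervalIntegrable
          (fun θ => B (p₁ θ) (br (deriv p₂ θ) (v.1 θ)) + B (p₁ θ) (br (p₂ θ) (deriv v.1 θ)))
          MeasureTheory.volume 0 (2 * Real.pi) :=
        ((continuous_bilin B hcp₁ (continuous_bilin br hcp₂' hcv)).add
          (continuous_bilin B hcp₁ (continuous_bilin br hcp₂ hcv'))).intervalIntegrable _ _
      have hintS2 : IntervalIntegrable
          (fun θ => B (p₂ θ) (br (deriv p₁ θ) (v.1 θ)) + B (p₂ θ) (br (p₁ θ) (deriv v.1 θ)))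
          MeasureTheory.volume 0 (2 * Real.pi) :=
        ((continuous_bilin B hcp₂ (continuous_bilin br hcp₁' hcv)).add
          (continuous_bilin B hcp₂ (continuous_bilin br hcp₁ hcv'))).intervalIntegrable _ _
      have hkey : (∫ θ in (0:ℝ)..(2 * Real.pi),
              (B (p₁ θ) (br (deriv p₂ θ) (v.1 θ)) + B (p₁ θ) (br (p₂ θ) (deriv v.1 θ))))
            - (∫ θ in (0:ℝ)..(2 * Real.pi),
              (B (p₂ θ) (br (deriv p₁ θ) (v.1 θ)) + B (p₂ θ) (br (p₁ θ) (deriv v.1 θ))))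
          = ∫ θ in (0:ℝ)..(2 * Real.pi), B (br (p₁ θ) (p₂ θ)) (deriv v.1 θ) := by
        rw [← intervalIntegral.integral_sub hintS1 hintS2]
        have heq : Set.EqOn
            (fun θ => (B (p₁ θ) (br (deriv p₂ θ) (v.1 θ)) + B (p₁ θ) (br (p₂ θ) (deriv v.1 θ)))
              - (B (p₂ θ) (br (deriv p₁ θ) (v.1 θ)) + B (p₂ θ) (br (p₁ θ) (deriv v.1 θ))))
            (fun θ => B (br (p₁ θ) (p₂ θ)) (deriv v.1 θ) + DG θ)
            (Set.uIcc (0:ℝ) (2 * Real.pi)) := by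
          intro θ _
          have a1 : B (p₁ θ) (br (deriv p₂ θ) (v.1 θ))
              = B (br (p₁ θ) (deriv p₂ θ)) (v.1 θ) := (hinv _ _ _).symm
          have a2 : B (p₁ θ) (br (p₂ θ) (deriv v.1 θ))
              = B (br (p₁ θ) (p₂ θ)) (deriv v.1 θ) := (hinv _ _ _).symm
          have a3 : B (p₂ θ) (br (deriv p₁ θ) (v.1 θ))
              = - B (br (deriv p₁ θ) (p₂ θ)) (v.1 θ) := by
            rw [← hinv, hanti (p₂ θ) (deriv p₁ θ)]; simp
          have a4 : B (p₂ θ) (br (p₁ θ) (deriv v.1 θ))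
              = - B (br (p₁ θ) (p₂ θ)) (deriv v.1 θ) := by
            rw [← hinv, hanti (p₂ θ) (p₁ θ)]; simp
          simp only [hDG, map_add, LinearMap.add_apply]
          linarith [a1, a2, a3, a4]
        rw [intervalIntegral.integral_congr heq,
          intervalIntegral.integral_add hintA (hcontDG.intervalIntegrable _ _), hFTC, add_zero]
      rw [← hkey]; ring
  · -- the derivation property
    simp only [dAlpha, kmBracket]
    rw [Prod.ext_iff]
    constructor
    · -- first components: Jacobi identity
      simp only [Prod.fst_add]
      funext θ
      simp only [Pi.add_apply]
      have h := hbr3 (p θ) (v.1 θ) (w.1 θ)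
      rw [eq_sub_iff_add_eq] at h
      exact h.symm
    · -- second components
      simp only [Prod.snd_add]
      have e₃ : ∀ θ : ℝ, deriv (fun t => br (v.1 t) (w.1 t)) θ
          = br (deriv v.1 θ) (w.1 θ) + br (v.1 θ) (deriv w.1 θ) := fun θ =>
        (hasDerivAt_bilin br (hdv θ) (hdw θ)).deriv
      have e₄ : ∀ θ : ℝ, deriv (fun t => br (p t) (w.1 t)) θ
          = br (deriv p θ) (w.1 θ) + br (p θ) (deriv w.1 θ) := fun θ =>
        (hasDerivAt_bilin br (hdp θ) (hdw θ)).deriv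
      have int3 : (∫ θ in (0:ℝ)..(2 * Real.pi), B (p θ) (deriv (fun t => br (v.1 t) (w.1 t)) θ))
          = ∫ θ in (0:ℝ)..(2 * Real.pi),
              (B (p θ) (br (deriv v.1 θ) (w.1 θ)) + B (p θ) (br (v.1 θ) (deriv w.1 θ))) :=
        intervalIntegral.integral_congr (fun θ _ => by simp only [e₃ θ, map_add])
      have int4 : (∫ θ in (0:ℝ)..(2 * Real.pi), B (v.1 θ) (deriv (fun t => br (p t) (w.1 t)) θ))
          = ∫ θ in (0:ℝ)..(2 * Real.pi),
              (B (v.1 θ) (br (deriv p θ) (w.1 θ)) + B (v.1 θ) (br (p θ) (deriv w.1 θ))) :=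
        intervalIntegral.integral_congr (fun θ _ => by simp only [e₄ θ, map_add])
      rw [int3, int4]
      set DG : ℝ → ℝ := fun θ =>
        B (br (deriv p θ) (v.1 θ) + br (p θ) (deriv v.1 θ)) (w.1 θ)
          + B (br (p θ) (v.1 θ)) (deriv w.1 θ) with hDG
      have hcontDG : Continuous DG := by
        apply Continuous.add
        · exact continuous_bilin B
            ((continuous_bilin br hcp' hcv).add (continuous_bilin br hcp hcv')) hcw
        · exact continuous_bilin B (continuous_bilin br hcp hcv) hcw'
      have hFTC : (∫ θ in (0:ℝ)..(2 * Real.pi), DG θ) = 0 := by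
        have key : ∀ x ∈ Set.uIcc (0:ℝ) (2 * Real.pi),
            HasDerivAt (fun t => B (br (p t) (v.1 t)) (w.1 t)) (DG x) x := by
          intro x _
          have hF : HasDerivAt (fun t => br (p t) (v.1 t))
              (br (deriv p x) (v.1 x) + br (p x) (deriv v.1 x)) x :=
            hasDerivAt_bilin br (hdp x) (hdv x)
          have h := hasDerivAt_bilin B (f := fun t => br (p t) (v.1 t))
            hF.differentiableAt (hdw x)
          rw [hF.deriv] at h
          exact h
        rw [intervalIntegral.integral_eq_sub_of_hasDerivAt key
          (hcontDG.intervalIntegrable _ _)]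
        rw [hw1, hw0]; simp
      have hintR1 : IntervalIntegrable (fun θ => B (br (p θ) (v.1 θ)) (deriv w.1 θ))
          MeasureTheory.volume 0 (2 * Real.pi) :=
        (continuous_bilin B (continuous_bilin br hcp hcv) hcw').intervalIntegrable _ _
      have hintS4 : IntervalIntegrable
          (fun θ => B (v.1 θ) (br (deriv p θ) (w.1 θ)) + B (v.1 θ) (br (p θ) (deriv w.1 θ)))
          MeasureTheory.volume 0 (2 * Real.pi) :=
        ((continuous_bilin B hcv (continuous_bilin br hcp' hcw)).add
          (continuous_bilin B hcv (continuous_bilin br hcp hcw'))).intervalIntegrable _ _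
      have hkey : (∫ θ in (0:ℝ)..(2 * Real.pi),
              (B (p θ) (br (deriv v.1 θ) (w.1 θ)) + B (p θ) (br (v.1 θ) (deriv w.1 θ))))
          = (∫ θ in (0:ℝ)..(2 * Real.pi), B (br (p θ) (v.1 θ)) (deriv w.1 θ))
            + ∫ θ in (0:ℝ)..(2 * Real.pi),
              (B (v.1 θ) (br (deriv p θ) (w.1 θ)) + B (v.1 θ) (br (p θ) (deriv w.1 θ))) := by
        rw [← intervalIntegral.integral_add hintR1 hintS4]
        have heq : Set.EqOn
            (fun θ => B (p θ) (br (deriv v.1 θ) (w.1 θ)) + B (p θ) (br (v.1 θ) (deriv w.1 θ)))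
            (fun θ => (B (br (p θ) (v.1 θ)) (deriv w.1 θ)
              + (B (v.1 θ) (br (deriv p θ) (w.1 θ)) + B (v.1 θ) (br (p θ) (deriv w.1 θ))))
              + DG θ)
            (Set.uIcc (0:ℝ) (2 * Real.pi)) := by
          intro θ _
          have b1 : B (p θ) (br (deriv v.1 θ) (w.1 θ))
              = B (br (p θ) (deriv v.1 θ)) (w.1 θ) := (hinv _ _ _).symm
          have b2 : B (p θ) (br (v.1 θ) (deriv w.1 θ))
              = B (br (p θ) (v.1 θ)) (deriv w.1 θ) := (hinv _ _ _).symm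
          have b3 : B (v.1 θ) (br (deriv p θ) (w.1 θ))
              = - B (br (deriv p θ) (v.1 θ)) (w.1 θ) := by
            rw [← hinv, hanti (v.1 θ) (deriv p θ)]; simp
          have b4 : B (v.1 θ) (br (p θ) (deriv w.1 θ))
              = - B (br (p θ) (v.1 θ)) (deriv w.1 θ) := by
            rw [← hinv, hanti (v.1 θ) (p θ)]; simp
          simp only [hDG, map_add, LinearMap.add_apply]
          linarith [b1, b2, b3, b4]
        rw [intervalIntegral.integral_congr heq,
          intervalIntegral.integral_add
            (hintR1.add hintS4) (hcontDG.intervalIntegrable _ _), hFTC, add_zero]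
      rw [hkey]; ring
end

section
/- Let 𝔤 be a Lie algebra with symmetric invariant bilinear form ⟨·,·⟩ and k ∈ ℝ. Let V be the 2-term L∞-algebra with V₀ = 𝔤, V₁ = ℝ, d = 0, l₂(x,y) = [x,y] on objects, l₂(x,c) = 0 (trivial action), and l₃(x,y,z) = k⟨x,[y,z]⟩. Then V satisfies all axioms of a 2-term L∞-algebra; in particular the l₄ = 0 coherence condition reduces to the identity l₃([w,x],y,z) − l₃([w,y],x,z) + l₃([w,z],x,y) + l₃([x,y],w,z) − l₃([x,z],w,y) + l₃([y,z],w,x) = 0, which holds because ⟨·,[·,·]⟩ is an invariant totally antisymmetric form. -/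
/-- the skeletal Lie 2-algebra `𝔤ₖ`: with `V₀ = 𝔤`, `V₁ = ℝ`,
`d = 0`, `l₂` the bracket on objects and trivial on mixed degree, and
`l₃(x,y,z) = k⟨x,[y,z]⟩`, all the axioms of a 2-term L∞-algebra hold.  With
`d = 0` and trivial action, these reduce to the exact Jacobi identity for the
bracket of `𝔤` together with the 3-cocycle identity for `l₃` with values in
the trivial module `ℝ`. -/
theorem gk_is_two_term_Linfty
    (𝔤 : Type*) [LieRing 𝔤] [LieAlgebra ℝ 𝔤]
    (B : 𝔤 →ₗ[ℝ] 𝔤 →ₗ[ℝ] ℝ)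
    (hsymm : ∀ x y : 𝔤, B x y = B y x)
    (hinv : ∀ x y z : 𝔤, B ⁅x, y⁆ z = B x ⁅y, z⁆)
    (k : ℝ) :
    let l₃ : 𝔤 → 𝔤 → 𝔤 → ℝ := fun x y z => k * B x ⁅y, z⁆
    -- the Jacobi identity holds exactly (since d ∘ l₃ = 0)
    (∀ x y z : 𝔤, ⁅⁅x, y⁆, z⁆ + ⁅⁅y, z⁆, x⁆ + ⁅⁅z, x⁆, y⁆ = 0) ∧
    -- the l₄ = 0 coherence law: l₃ is a 3-cocycle
    (∀ w x y z : 𝔤,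
      l₃ ⁅w, x⁆ y z - l₃ ⁅w, y⁆ x z + l₃ ⁅w, z⁆ x y
        + l₃ ⁅x, y⁆ w z - l₃ ⁅x, z⁆ w y + l₃ ⁅y, z⁆ w x = 0) := by
  intro l₃
  constructor
  · intro x y z
    have h := leibniz_lie x y z
    have h2 : ⁅⁅x, y⁆, z⁆ = ⁅x, ⁅y, z⁆⁆ - ⁅y, ⁅x, z⁆⁆ := by
      rw [h]; abel
    rw [h2, ← lie_skew ⁅y, z⁆ x, ← lie_skew ⁅z, x⁆ y, ← lie_skew z x,
      lie_neg y]
    abel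
  · intro w x y z
    show k * B ⁅w, x⁆ ⁅y, z⁆ - k * B ⁅w, y⁆ ⁅x, z⁆ + k * B ⁅w, z⁆ ⁅x, y⁆
      + k * B ⁅x, y⁆ ⁅w, z⁆ - k * B ⁅x, z⁆ ⁅w, y⁆ + k * B ⁅y, z⁆ ⁅w, x⁆ = 0
    rw [hsymm ⁅x, y⁆, hsymm ⁅x, z⁆, hsymm ⁅y, z⁆, hinv, hinv, hinv]
    have h0 : ⁅x, ⁅y, z⁆⁆ - ⁅y, ⁅x, z⁆⁆ + ⁅z, ⁅x, y⁆⁆ = 0 := by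
      rw [leibniz_lie x y z, ← lie_skew ⁅x, y⁆ z]; abel
    have := congrArg (fun v => (B w v : ℝ)) h0
    simp only [map_add, map_sub, map_zero] at this
    linear_combination (2*k) * this
end
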